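/- Let f : [0,c] → [0,1] be continuously differentiable with f(0) = 0, f(c) ≥ l(c) where l(x) = βx and β = min{f'(0), f(c)/c}, and suppose f satisfies the minimum principle: for all x < y < z in [0,c], f'(y) ≥ min{f'(x), f'(z)}. If additionally f'(c) = 0, then f(x) ≥ βx for all x ∈ [0,c]. -/
import Mathlib


/-- Minimum-principle argument: if `f : [0,c] → [0,1]` is `C¹` with `f 0 = 0`,
`f c ≥ β·c` where `β = min (f' 0) (f c / c) > 0`, `f' c = 0`, and `f` satisfies the
minimum principle `f'(y) ≥ min (f'(x)) (f'(z))` for `x < y < z` in `[0,c]`, then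
`f x ≥ β·x` on `[0,c]`. -/
theorem stmt3 (c β : ℝ) (hc : 0 < c) (f f' : ℝ → ℝ)
    (hderiv : ∀ x ∈ Set.Icc 0 c, HasDerivAt f (f' x) x)
    (hcont : ContinuousOn f' (Set.Icc 0 c))
    (hf0 : f 0 = 0)
    (hβ : β = min (f' 0) (f c / c)) (hβpos : 0 < β)
    (hfc : f c ≥ β * c)
    (hmin : ∀ x y z : ℝ, 0 ≤ x → x < y → y < z → z ≤ c →
      f' y ≥ min (f' x) (f' z))
    (hfc' : f' c = 0) :
    ∀ x ∈ Set.Icc 0 c, f x ≥ β * x := by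
  have hfcont : ContinuousOn f (Set.Icc 0 c) := fun x hx =>
    (hderiv x hx).continuousAt.continuousWithinAt
  rintro x ⟨hx0, hxc⟩
  by_contra hlt
  push_neg at hlt
  have hx0' : 0 < x := by
    rcases lt_or_eq_of_le hx0 with h | h
    · exact h
    · rw [← h, hf0, mul_zero] at hlt; linarith
  have hxc' : x < c := by
    rcases lt_or_eq_of_le hxc with h | h
    · exact h
    · rw [h] at hlt; linarith
  -- MVT on [0, x]
  obtain ⟨a, haI, ha⟩ := exists_hasDerivAt_eq_slope f f' hx0'
    (hfcont.mono (Set.Icc_subset_Icc le_rfl hxc))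
    (fun y hy => hderiv y ⟨le_of_lt hy.1, le_trans (le_of_lt hy.2) hxc⟩)
  -- MVT on [x, c]
  obtain ⟨b, hbI, hb⟩ := exists_hasDerivAt_eq_slope f f' hxc'
    (hfcont.mono (Set.Icc_subset_Icc hx0 le_rfl))
    (fun y hy => hderiv y ⟨le_trans hx0 (le_of_lt hy.1), le_of_lt hy.2⟩)
  have hfa : f' a < β := by
    rw [ha, hf0]
    rw [div_lt_iff₀ (by linarith)]
    linarith
  have hfb : f' b > β := by
    rw [hb, gt_iff_lt, lt_div_iff₀ (by linarith)]
    nlinarith [hbI.2, hbI.1]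
  have hβ0 : f' 0 ≥ β := by rw [hβ]; exact min_le_left _ _
  have := hmin 0 a b le_rfl haI.1 (lt_trans haI.2 hbI.1) (le_of_lt hbI.2)
  have : f' a ≥ β := le_trans (le_min hβ0 (le_of_lt hfb)) this
  linarith
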